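/- Let h : ℝ → ℝ be smooth with h(y) < 0 for all y ∈ ℝ. Let y : [0,T) → ℝ be a maximal solution of y'' = h(y) (with arbitrary initial conditions y(0) = y₀, y'(0) = y₀'). If T < ∞, then lim_{t→T} y(t) = −∞, lim_{t→T} y'(t) = −∞, and limsup_{t→T} h(y(t))/y(t) = +∞. -/

import Mathlib

open Filter Topology
open Filter Topology Set
open scoped NNReal

private lemma monoIco {a b : ℝ} {f g : ℝ → ℝ}
    (hf : ∀ t ∈ Set.Ico a b, HasDerivWithinAt f (g t) (Set.Ico a b) t)
    (hg : ∀ t ∈ Set.Ico a b, 0 ≤ g t) : MonotoneOn f (Set.Ico a b) := by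
  apply monotoneOn_of_hasDerivWithinAt_nonneg (f' := g) (convex_Ico a b)
    (fun t ht => (hf t ht).continuousWithinAt) <;> intro x hx <;> rw [interior_Ico] at hx
  · exact (hf x (Ioo_subset_Ico_self hx)).mono (by rw [interior_Ico]; exact Ioo_subset_Ico_self)
  · exact hg x (Ioo_subset_Ico_self hx)

private lemma exists_solution_mem {E : Type*} [NormedAddCommGroup E] [NormedSpace ℝ E]
    [CompleteSpace E] {v : ℝ → E → E} {tMin tMax : ℝ} {t₀ : Set.Icc tMin tMax} (x₀ : E)
    {a L K : ℝ≥0}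
    (hpl : IsPicardLindelof v t₀ x₀ a 0 L K) :
    ∃ f : ℝ → E, f t₀ = x₀ ∧ (∀ t ∈ Set.Icc tMin tMax, f t ∈ Metric.closedBall x₀ a) ∧
      ∀ t ∈ Set.Icc tMin tMax, HasDerivWithinAt f (v t (f t)) (Set.Icc tMin tMax) t := by
  obtain ⟨α, hα⟩ := ODE.FunSpace.exists_isFixedPt_next hpl (Metric.mem_closedBall_self (by simp))
  refine ⟨α.compProj, by rw [ODE.FunSpace.compProj_val, ← hα, ODE.FunSpace.next_apply₀],
    fun t _ => α.compProj_mem_closedBall hpl.mul_max_le, fun t ht => ?_⟩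
  apply ODE.hasDerivWithinAt_picard_Icc t₀.2 hpl.continuousOn_uncurry
    α.continuous_compProj.continuousOn (fun _ _ => α.compProj_mem_closedBall hpl.mul_max_le)
    x₀ ht |>.congr_of_mem _ ht
  intro t' ht'
  nth_rw 1 [← hα]
  rw [ODE.FunSpace.compProj_of_mem ht', ODE.FunSpace.next_apply]


/-- `y` (with derivative `y'`) solves the ODE `y'' = h(y)` on `[0,T)`. -/
def SolOnIco (h : ℝ → ℝ) (T : ℝ) (y y' : ℝ → ℝ) : Prop :=
  (∀ t ∈ Set.Ico (0:ℝ) T, HasDerivWithinAt y (y' t) (Set.Ico (0:ℝ) T) t) ∧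
  (∀ t ∈ Set.Ico (0:ℝ) T, HasDerivWithinAt y' (h (y t)) (Set.Ico (0:ℝ) T) t)

private lemma sol_extend (h : ℝ → ℝ) (hh : ContDiff ℝ (⊤ : ℕ∞) h) {T : ℝ} (hT : 0 < T)
    {y y' : ℝ → ℝ} (hsol : SolOnIco h T y y') {R : ℝ}
    (hbdd : ∀ t ∈ Set.Ico (0:ℝ) T, |y t| ≤ R ∧ |y' t| ≤ R) :
    ∃ T' : ℝ, T < T' ∧ ∃ z z' : ℝ → ℝ, SolOnIco h T' z z' ∧ Set.EqOn z y (Set.Ico (0:ℝ) T) := by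
  obtain ⟨hy, hy'⟩ := hsol
  set v : ℝ → (ℝ × ℝ) → (ℝ × ℝ) := fun _ p => (p.2, h p.1) with hv
  set Y : ℝ → ℝ × ℝ := fun t => (y t, y' t) with hY
  have h0T : (0:ℝ) ∈ Set.Ico (0:ℝ) T := ⟨le_refl 0, hT⟩
  have hR0 : 0 ≤ R := (abs_nonneg _).trans (hbdd 0 h0T).1
  -- bound for h on the relevant compact set
  obtain ⟨B, hB⟩ := (isCompact_Icc (a := -(R+1)) (b := R+1)).exists_bound_of_continuousOn
    hh.continuous.continuousOn
  -- Lipschitz constant for h on the relevant compact set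
  obtain ⟨B₂, hB₂⟩ := (isCompact_Icc (a := -(R+1)) (b := R+1)).exists_bound_of_continuousOn
    (hh.continuous_deriv (by simp)).continuousOn
  have hhlip : LipschitzOnWith ‖B₂‖₊ h (Set.Icc (-(R+1)) (R+1)) := by
    apply (convex_Icc _ _).lipschitzOnWith_of_nnnorm_hasDerivWithin_le (f' := deriv h)
    · intro x hx
      exact ((hh.differentiable (by simp)).differentiableAt.hasDerivAt).hasDerivWithinAt
    · intro x hx
      have h1 : ‖deriv h x‖ ≤ ‖B₂‖ := (hB₂ x hx).trans (le_abs_self B₂)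
      exact_mod_cast h1
  set K : ℝ≥0 := max 1 ‖B₂‖₊ with hK
  have hmem1 : ∀ p : ℝ × ℝ, p ∈ Metric.closedBall (0 : ℝ × ℝ) (R+1) →
      p.1 ∈ Set.Icc (-(R+1)) (R+1) := by
    intro p hp
    rw [mem_closedBall_zero_iff] at hp
    have := (norm_fst_le p).trans hp
    rw [Real.norm_eq_abs, abs_le] at this
    exact ⟨this.1, this.2⟩
  have hVlip : LipschitzOnWith K (fun p : ℝ × ℝ => (p.2, h p.1))
      (Metric.closedBall (0 : ℝ × ℝ) (R+1)) := by
    apply LipschitzOnWith.of_dist_le_mul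
    intro p hp q hq
    have hd1 : dist p.2 q.2 ≤ dist p q := by rw [Prod.dist_eq]; exact le_max_right _ _
    have hd2 : dist (h p.1) (h q.1) ≤ ‖B₂‖ * dist p.1 q.1 := by
      exact_mod_cast hhlip.dist_le_mul p.1 (hmem1 p hp) q.1 (hmem1 q hq)
    have hd3 : dist p.1 q.1 ≤ dist p q := by rw [Prod.dist_eq]; exact le_max_left _ _
    have hKc : (K : ℝ) = max 1 ‖B₂‖ := by
      rw [hK]; push_cast; rfl
    rw [Prod.dist_eq, hKc]
    have hd0 : (0:ℝ) ≤ dist p q := dist_nonneg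
    apply max_le
    · nlinarith [le_max_left (1:ℝ) ‖B₂‖]
    · nlinarith [le_max_right (1:ℝ) ‖B₂‖, norm_nonneg B₂, dist_nonneg (x := p.1) (y := q.1)]
  have hVbound : ∀ p ∈ Metric.closedBall (0 : ℝ × ℝ) (R+1),
      ‖((p.2, h p.1) : ℝ × ℝ)‖ ≤ max (R+1) B := by
    intro p hp
    rw [mem_closedBall_zero_iff] at hp
    rw [Prod.norm_def]
    apply max_le
    · exact le_trans (le_trans (norm_snd_le p) hp) (le_max_left _ _)
    · exact le_trans (hB p.1 (hmem1 p (by rwa [mem_closedBall_zero_iff]))) (le_max_right _ _)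
  set Cv : ℝ := max (max (R+1) B) 1 with hCv
  have hCv1 : (1:ℝ) ≤ Cv := le_max_right _ _
  have hCv0 : (0:ℝ) < Cv := lt_of_lt_of_le one_pos hCv1
  set δ : ℝ := 1 / Cv with hδ
  have hδ0 : 0 < δ := by positivity
  set t₁ : ℝ := max (T - δ/2) (T/2) with ht₁
  have ht₁0 : 0 < t₁ := lt_of_lt_of_le (by linarith) (le_max_right _ _)
  have ht₁T : t₁ < T := max_lt (by linarith) (by linarith)
  have hTt₁δ : T < t₁ + δ := by
    have : T - δ/2 ≤ t₁ := le_max_left _ _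
    linarith
  have ht₁I : t₁ ∈ Set.Ico (0:ℝ) T := ⟨ht₁0.le, ht₁T⟩
  set x₁ : ℝ × ℝ := (y t₁, y' t₁) with hx₁
  have hYball : ∀ t ∈ Set.Ico (0:ℝ) T, Y t ∈ Metric.closedBall (0 : ℝ × ℝ) R := by
    intro t ht
    rw [mem_closedBall_zero_iff, Prod.norm_def]
    exact max_le (by simpa [Real.norm_eq_abs] using (hbdd t ht).1)
      (by simpa [Real.norm_eq_abs] using (hbdd t ht).2)
  have hx₁ball : Metric.closedBall x₁ 1 ⊆ Metric.closedBall (0 : ℝ × ℝ) (R+1) := by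
    apply Metric.closedBall_subset_closedBall'
    have hx1n : dist x₁ (0 : ℝ × ℝ) ≤ R := hYball t₁ ht₁I
    linarith
  have hpl : IsPicardLindelof v (tmin := t₁ - δ) (tmax := t₁ + δ)
      ⟨t₁, ⟨by linarith, by linarith⟩⟩ x₁ 1 0 ⟨Cv, hCv0.le⟩ K :=
    { lipschitzOnWith := fun t _ => by simpa using hVlip.mono hx₁ball
      continuousOn := fun _ _ => continuousOn_const
      norm_le := fun t _ p hp => le_trans (hVbound p (hx₁ball (by simpa using hp))) (le_max_left _ _)
      mul_max_le := by
        show Cv * max (t₁ + δ - t₁) (t₁ - (t₁ - δ)) ≤ ((1:ℝ≥0):ℝ) - ((0:ℝ≥0):ℝ)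
        rw [NNReal.coe_one, NNReal.coe_zero, sub_zero]
        rw [add_sub_cancel_left, sub_sub_cancel, max_self, hδ]
        rw [mul_one_div, div_self (ne_of_gt hCv0)] }
  obtain ⟨w, hw0, hwball, hwd⟩ := exists_solution_mem x₁ hpl
  have hw0 : w t₁ = x₁ := hw0
  -- uniqueness: Y = w on [t₁, T)
  have hYd : ∀ τ ∈ Set.Ico (0:ℝ) T, HasDerivWithinAt Y (v τ (Y τ)) (Set.Ico (0:ℝ) T) τ :=
    fun τ hτ => (hy τ hτ).prodMk (hy' τ hτ)
  have heq : ∀ t ∈ Set.Ico t₁ T, Y t = w t := by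
    intro t ht
    have htT : t < T := ht.2
    have ht₁t : t₁ ≤ t := ht.1
    have key := ODE_solution_unique_of_mem_Icc_right
      (v := v) (s := fun _ => Metric.closedBall (0 : ℝ × ℝ) (R+1)) (K := K)
      (f := Y) (g := w) (a := t₁) (b := t)
      (fun _ _ => hVlip) ?_ ?_ ?_ ?_ ?_ ?_ ?_
    · exact key ⟨ht₁t, le_refl t⟩
    · -- ContinuousOn Y (Icc t₁ t)
      intro τ hτ
      have hτI : τ ∈ Set.Ico (0:ℝ) T := ⟨le_trans ht₁0.le hτ.1, lt_of_le_of_lt hτ.2 htT⟩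
      exact ((hYd τ hτI).continuousWithinAt).mono
        (fun σ hσ => ⟨le_trans ht₁0.le hσ.1, lt_of_le_of_lt hσ.2 htT⟩)
    · -- deriv of Y within Ici
      intro τ hτ
      have hτI : τ ∈ Set.Ico (0:ℝ) T := ⟨le_trans ht₁0.le hτ.1, lt_of_lt_of_le hτ.2 htT.le⟩
      refine (hYd τ hτI).mono_of_mem_nhdsWithin ?_
      refine mem_of_superset (inter_mem_nhdsWithin (Set.Ici τ) (Iio_mem_nhds hτI.2)) ?_
      exact fun σ hσ => ⟨le_trans hτI.1 hσ.1, hσ.2⟩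
    · exact fun τ hτ => Metric.closedBall_subset_closedBall (by linarith) (hYball τ ⟨le_trans ht₁0.le hτ.1, lt_of_lt_of_le hτ.2 htT.le⟩)
    · -- ContinuousOn w (Icc t₁ t)
      intro τ hτ
      have hτJ : τ ∈ Set.Icc (t₁ - δ) (t₁ + δ) :=
        ⟨by linarith [hτ.1], by linarith [hτ.2, htT, hTt₁δ]⟩
      exact ((hwd τ hτJ).continuousWithinAt).mono
        (fun σ hσ => ⟨by linarith [hσ.1], by linarith [hσ.2, htT, hTt₁δ]⟩)
    · intro τ hτ
      have hτJ : τ ∈ Set.Icc (t₁ - δ) (t₁ + δ) :=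
        ⟨by linarith [hτ.1], by linarith [hτ.2, htT, hTt₁δ]⟩
      refine (hwd τ hτJ).mono_of_mem_nhdsWithin ?_
      refine mem_of_superset (inter_mem_nhdsWithin (Set.Ici τ)
        (Iio_mem_nhds (show τ < t₁ + δ by linarith [hτ.2, htT, hTt₁δ]))) ?_
      intro σ hσ
      have h1 : τ ≤ σ := hσ.1
      exact ⟨by linarith [hτ.1], le_of_lt hσ.2⟩
    · intro τ hτ
      exact hx₁ball (by simpa using hwball τ ⟨by linarith [hτ.1], by linarith [hτ.2, htT, hTt₁δ]⟩)
    · exact hw0.symm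
  -- the glued solution
  set T' : ℝ := t₁ + δ with hT'
  set z : ℝ → ℝ := fun t => if t < t₁ then y t else (w t).1 with hzdef
  set z' : ℝ → ℝ := fun t => if t < t₁ then y' t else (w t).2 with hz'def
  have hzy : ∀ σ, σ ≤ t₁ → z σ = y σ := by
    intro σ hσ
    rcases lt_or_eq_of_le hσ with hc | hc
    · rw [hzdef]; simp only []; rw [if_pos hc]
    · rw [hzdef]; simp only []; rw [hc, if_neg (lt_irrefl t₁), hw0]
  have hz'y' : ∀ σ, σ ≤ t₁ → z' σ = y' σ := by
    intro σ hσ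
    rcases lt_or_eq_of_le hσ with hc | hc
    · rw [hz'def]; simp only []; rw [if_pos hc]
    · rw [hz'def]; simp only []; rw [hc, if_neg (lt_irrefl t₁), hw0]
  have hzw : ∀ σ, t₁ ≤ σ → z σ = (w σ).1 := by
    intro σ hσ; rw [hzdef]; simp only []; rw [if_neg (not_lt.2 hσ)]
  have hz'w : ∀ σ, t₁ ≤ σ → z' σ = (w σ).2 := by
    intro σ hσ; rw [hz'def]; simp only []; rw [if_neg (not_lt.2 hσ)]
  -- derivatives of the components of w
  have hw1 : ∀ τ ∈ Set.Icc (t₁ - δ) (t₁ + δ),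
      HasDerivWithinAt (fun σ => (w σ).1) ((w τ).2) (Set.Icc (t₁ - δ) (t₁ + δ)) τ := by
    intro τ hτ
    exact (ContinuousLinearMap.fst ℝ ℝ ℝ).hasFDerivAt.comp_hasDerivWithinAt τ (hwd τ hτ)
  have hw2 : ∀ τ ∈ Set.Icc (t₁ - δ) (t₁ + δ),
      HasDerivWithinAt (fun σ => (w σ).2) (h ((w τ).1)) (Set.Icc (t₁ - δ) (t₁ + δ)) τ := by
    intro τ hτ
    exact (ContinuousLinearMap.snd ℝ ℝ ℝ).hasFDerivAt.comp_hasDerivWithinAt τ (hwd τ hτ)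
  have hs₂sub : Set.Ico (0:ℝ) T' ∩ Set.Ici t₁ ⊆ Set.Icc (t₁ - δ) (t₁ + δ) := by
    intro σ hσ
    have h1 : σ < T' := hσ.1.2
    have h2 : t₁ ≤ σ := hσ.2
    rw [hT'] at h1
    exact ⟨by linarith, h1.le⟩
  have hmain : ∀ t ∈ Set.Ico (0:ℝ) T',
      HasDerivWithinAt z (z' t) (Set.Ico (0:ℝ) T') t ∧
      HasDerivWithinAt z' (h (z t)) (Set.Ico (0:ℝ) T') t := by
    intro t ht
    rcases lt_trichotomy t t₁ with hlt | heqt | hgt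
    · -- t < t₁
      have hsub1 : Set.Ico (0:ℝ) T' ∩ Set.Iio t₁ ⊆ Set.Ico 0 T :=
        fun σ hσ => ⟨hσ.1.1, lt_trans hσ.2 ht₁T⟩
      have hmem : Set.Ico (0:ℝ) T' ∩ Set.Iio t₁ ∈ 𝓝[Set.Ico (0:ℝ) T'] t :=
        inter_mem_nhdsWithin _ (Iio_mem_nhds hlt)
      have htI : t ∈ Set.Ico (0:ℝ) T := ⟨ht.1, lt_trans hlt ht₁T⟩
      constructor
      · rw [hz'y' t hlt.le]
        exact (((hy t htI).mono hsub1).congr (fun σ hσ => hzy σ hσ.2.le)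
          (hzy t hlt.le)).mono_of_mem_nhdsWithin hmem
      · rw [hzy t hlt.le]
        exact (((hy' t htI).mono hsub1).congr (fun σ hσ => hz'y' σ hσ.2.le)
          (hz'y' t hlt.le)).mono_of_mem_nhdsWithin hmem
    · -- t = t₁
      subst heqt
      have hsub₁ : Set.Ico (0:ℝ) T' ∩ Set.Iic t₁ ⊆ Set.Ico 0 T :=
        fun σ hσ => ⟨hσ.1.1, lt_of_le_of_lt hσ.2 ht₁T⟩
      have htJ : t₁ ∈ Set.Icc (t₁ - δ) (t₁ + δ) := ⟨by linarith, by linarith⟩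
      have hunion : (Set.Ico (0:ℝ) T' ∩ Set.Iic t₁) ∪ (Set.Ico (0:ℝ) T' ∩ Set.Ici t₁)
          = Set.Ico (0:ℝ) T' := by
        rw [← Set.inter_union_distrib_left, Set.Iic_union_Ici, Set.inter_univ]
      have hwt₁2 : (w t₁).2 = y' t₁ := by rw [hw0]
      have hwt₁1 : (w t₁).1 = y t₁ := by rw [hw0]
      constructor
      · have hL : HasDerivWithinAt z (y' t₁) (Set.Ico (0:ℝ) T' ∩ Set.Iic t₁) t₁ :=
          ((hy t₁ ht₁I).mono hsub₁).congr (fun σ hσ => hzy σ hσ.2) (hzy t₁ le_rfl)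
        have hR : HasDerivWithinAt z ((w t₁).2) (Set.Ico (0:ℝ) T' ∩ Set.Ici t₁) t₁ :=
          (((hw1 t₁ htJ).mono hs₂sub).congr (fun σ hσ => hzw σ hσ.2) (hzw t₁ le_rfl))
        rw [hwt₁2] at hR
        have hcomb := hL.union hR
        rw [hunion] at hcomb
        rw [hz'y' t₁ le_rfl]
        exact hcomb
      · have hL : HasDerivWithinAt z' (h (y t₁)) (Set.Ico (0:ℝ) T' ∩ Set.Iic t₁) t₁ :=
          ((hy' t₁ ht₁I).mono hsub₁).congr (fun σ hσ => hz'y' σ hσ.2) (hz'y' t₁ le_rfl)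
        have hR : HasDerivWithinAt z' (h ((w t₁).1)) (Set.Ico (0:ℝ) T' ∩ Set.Ici t₁) t₁ :=
          (((hw2 t₁ htJ).mono hs₂sub).congr (fun σ hσ => hz'w σ hσ.2) (hz'w t₁ le_rfl))
        rw [hwt₁1] at hR
        have hcomb := hL.union hR
        rw [hunion] at hcomb
        rw [hzy t₁ le_rfl]
        exact hcomb
    · -- t₁ < t
      have hmem : Set.Ico (0:ℝ) T' ∩ Set.Ici t₁ ∈ 𝓝[Set.Ico (0:ℝ) T'] t :=
        inter_mem_nhdsWithin _ (Ici_mem_nhds hgt)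
      have htJ : t ∈ Set.Icc (t₁ - δ) (t₁ + δ) := by
        have h1 : t < T' := ht.2
        rw [hT'] at h1
        exact ⟨by linarith, h1.le⟩
      constructor
      · rw [hz'w t hgt.le]
        exact ((((hw1 t htJ).mono hs₂sub).congr (fun σ hσ => hzw σ hσ.2)
          (hzw t hgt.le))).mono_of_mem_nhdsWithin hmem
      · rw [hzw t hgt.le]
        exact ((((hw2 t htJ).mono hs₂sub).congr (fun σ hσ => hz'w σ hσ.2)
          (hz'w t hgt.le))).mono_of_mem_nhdsWithin hmem
  refine ⟨T', hTt₁δ, z, z', ⟨fun t ht => (hmain t ht).1, fun t ht => (hmain t ht).2⟩, ?_⟩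
  intro t ht
  rcases lt_or_ge t t₁ with hlt | hge
  · exact hzy t hlt.le
  · rw [hzw t hge, ← heq t ⟨hge, ht.2⟩]


set_option maxHeartbeats 1000000 in
/-- If `h` is smooth and everywhere negative, and `y : [0,T) → ℝ` is a maximal
solution of `y'' = h(y)` with `T < ∞`, then `y(t) → -∞` and `y'(t) → -∞` as
`t → T`, and `limsup_{t → T} h(y(t))/y(t) = +∞`. -/
theorem maximal_solution_blowup (h : ℝ → ℝ) (hh : ContDiff ℝ (⊤ : ℕ∞) h)
    (hneg : ∀ u : ℝ, h u < 0) (T : ℝ) (hT : 0 < T) (y y' : ℝ → ℝ)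
    (hsol : SolOnIco h T y y')
    (hmax : ¬ ∃ T' : ℝ, T < T' ∧ ∃ z z' : ℝ → ℝ,
      SolOnIco h T' z z' ∧ Set.EqOn z y (Set.Ico (0:ℝ) T)) :
    Tendsto y (𝓝[<] T) atBot ∧ Tendsto y' (𝓝[<] T) atBot ∧
      ∀ C : ℝ, ∃ᶠ t in 𝓝[<] T, C < h (y t) / y t := by
  obtain ⟨hy, hy'⟩ := hsol
  have h0T : (0:ℝ) ∈ Set.Ico (0:ℝ) T := ⟨le_refl 0, hT⟩
  -- y' is antitone on [0,T)
  have hanti : AntitoneOn y' (Set.Ico (0:ℝ) T) := by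
    have hm := monoIco (f := fun t => -y' t) (g := fun t => -h (y t))
      (fun t ht => (hy' t ht).neg) (fun t ht => by show 0 ≤ -h (y t); linarith [hneg (y t)])
    intro s hs t ht hst
    have := hm hs ht hst
    simpa using this
  -- slope upper bound: y t ≤ y s + |y' 0| (t - s) for s ≤ t in [0,T)
  have hub : ∀ s ∈ Set.Ico (0:ℝ) T, ∀ t ∈ Set.Ico (0:ℝ) T, s ≤ t →
      y t ≤ y s + |y' 0| * (t - s) := by
    have hm := monoIco (f := fun t => |y' 0| * t - y t) (g := fun t => |y' 0| * 1 - y' t)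
      (fun t ht => ((hasDerivWithinAt_id t _).const_mul (|y' 0|)).sub (hy t ht))
      (fun t ht => by
        show 0 ≤ |y' 0| * 1 - y' t
        have h1 : y' t ≤ y' 0 := hanti h0T ht ht.1
        have h2 : y' 0 ≤ |y' 0| := le_abs_self _
        linarith)
    intro s hs t ht hst
    have := hm hs ht hst
    simp only [] at this
    linarith
  -- y is unbounded below
  have hunb : ∀ M : ℝ, ∃ t ∈ Set.Ico (0:ℝ) T, y t < M := by
    intro M
    by_contra hcon
    push_neg at hcon
    -- y is bounded; extension contradiction
    set R₀ : ℝ := max (|M| + |y 0| + |y' 0| * T) 0 with hR₀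
    have hyb : ∀ t ∈ Set.Ico (0:ℝ) T, |y t| ≤ R₀ := by
      intro t ht
      rw [abs_le]
      constructor
      · have hm1 := hcon t ht
        have hm2 : -|M| ≤ y t := le_trans (neg_abs_le M) hm1
        have hy0 : (0:ℝ) ≤ |y 0| := abs_nonneg _
        have hy0' : (0:ℝ) ≤ |y' 0| * T := mul_nonneg (abs_nonneg _) hT.le
        have hm3 : |M| + |y 0| + |y' 0| * T ≤ R₀ := le_max_left _ _
        linarith
      · have h1 := hub 0 h0T t ht ht.1
        have h2 : y 0 ≤ |y 0| := le_abs_self _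
        have h3 : |y' 0| * (t - 0) ≤ |y' 0| * T := by
          apply mul_le_mul_of_nonneg_left _ (abs_nonneg _)
          linarith [ht.2]
        have : y t ≤ |y 0| + |y' 0| * T := by linarith
        refine le_trans this (le_trans ?_ (le_max_left _ _))
        linarith [abs_nonneg M]
    obtain ⟨B, hB⟩ := (isCompact_Icc (a := -R₀) (b := R₀)).exists_bound_of_continuousOn
      hh.continuous.continuousOn
    have hB0 : 0 ≤ B := le_trans (norm_nonneg _) (hB (y 0) (abs_le.1 (hyb 0 h0T)))
    have hy'b : ∀ t ∈ Set.Ico (0:ℝ) T, |y' t| ≤ |y' 0| + B * T := by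
      intro t ht
      have hmvt := Convex.norm_image_sub_le_of_norm_hasDerivWithin_le
        (f := y') (f' := fun t => h (y t)) (C := B) hy'
        (fun x hx => hB (y x) (abs_le.1 (hyb x hx))) (convex_Ico _ _) h0T ht
      rw [Real.norm_eq_abs, Real.norm_eq_abs] at hmvt
      have h1 : |y' t| - |y' 0| ≤ |y' t - y' 0| := by
        have := abs_sub_abs_le_abs_sub (y' t) (y' 0)
        linarith
      have h2 : |t - 0| ≤ T := by rw [sub_zero, abs_of_nonneg ht.1]; linarith [ht.2]
      nlinarith
    exfalso
    apply hmax
    apply sol_extend h hh hT ⟨hy, hy'⟩ (R := max R₀ (|y' 0| + B * T))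
    intro t ht
    exact ⟨le_trans (hyb t ht) (le_max_left _ _), le_trans (hy'b t ht) (le_max_right _ _)⟩
  -- a point with negative y'
  have hs₀ : ∃ s₀ ∈ Set.Ico (0:ℝ) T, y' s₀ < 0 := by
    by_contra hcon
    push_neg at hcon
    have hm := monoIco (f := y) (g := y') hy hcon
    obtain ⟨t, ht, hlt⟩ := hunb (y 0)
    have := hm h0T ht ht.1
    linarith
  obtain ⟨s₀, hs₀I, hs₀neg⟩ := hs₀
  -- y is antitone on [s₀, T)
  have hantiy : AntitoneOn y (Set.Ico s₀ T) := by
    have hsub : Set.Ico s₀ T ⊆ Set.Ico 0 T := fun σ hσ => ⟨le_trans hs₀I.1 hσ.1, hσ.2⟩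
    have hm := monoIco (f := fun t => -y t) (g := fun t => -y' t)
      (fun t ht => ((hy t (hsub ht)).mono hsub).neg)
      (fun t ht => by
        show 0 ≤ -y' t
        have := hanti hs₀I (hsub ht) ht.1
        linarith)
    intro p hp q hq hpq
    have := hm hp hq hpq
    simpa using this
  -- y tends to -∞
  have htendy : Tendsto y (𝓝[<] T) atBot := by
    rw [tendsto_atBot]
    intro M
    obtain ⟨t₁, ht₁, hlt⟩ := hunb (M - |y' 0| * T - 1)
    set s₁ : ℝ := max t₁ s₀ with hs₁
    have hs₁I : s₁ ∈ Set.Ico (0:ℝ) T := ⟨le_trans ht₁.1 (le_max_left _ _), max_lt ht₁.2 hs₀I.2⟩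
    have hys₁ : y s₁ < M := by
      have h1 := hub t₁ ht₁ s₁ hs₁I (le_max_left _ _)
      have h2 : |y' 0| * (s₁ - t₁) ≤ |y' 0| * T := by
        apply mul_le_mul_of_nonneg_left _ (abs_nonneg _)
        have h3 := hs₁I.2
        have h4 := ht₁.1
        linarith
      linarith
    filter_upwards [Ioo_mem_nhdsLT_of_mem (show T ∈ Set.Ioc s₁ T from ⟨hs₁I.2, le_refl T⟩)]
      with t ht2
    have htI : t ∈ Set.Ico s₀ T := ⟨le_trans (le_max_right t₁ s₀) ht2.1.le, ht2.2⟩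
    have := hantiy ⟨le_max_right _ _, hs₁I.2⟩ htI ht2.1.le
    linarith
  -- y' tends to -∞
  have htendy' : Tendsto y' (𝓝[<] T) atBot := by
    rw [tendsto_atBot]
    intro M
    have hex : ∃ s ∈ Set.Ico (0:ℝ) T, y' s < M := by
      by_contra hcon
      push_neg at hcon
      have hm := monoIco (f := fun t => y t - M * t) (g := fun t => y' t - M * 1)
        (fun t ht => (hy t ht).sub ((hasDerivWithinAt_id t _).const_mul M))
        (fun t ht => by show 0 ≤ y' t - M * 1; linarith [hcon t ht])
      obtain ⟨t, ht, hlt⟩ := hunb (y 0 - |M| * T - 1)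
      have h1 := hm h0T ht ht.1
      simp only [] at h1
      have h2 : -(|M| * T) ≤ M * t := by
        nlinarith [mul_nonneg (show (0:ℝ) ≤ M + |M| by linarith [neg_abs_le M]) ht.1,
          mul_nonneg (abs_nonneg M) (show (0:ℝ) ≤ T - t by linarith [ht.2])]
      linarith
    obtain ⟨s, hsI, hsM⟩ := hex
    filter_upwards [Ioo_mem_nhdsLT_of_mem (show T ∈ Set.Ioc s T from ⟨hsI.2, le_refl T⟩)]
      with t ht2
    have := hanti hsI ⟨le_trans hsI.1 ht2.1.le, ht2.2⟩ ht2.1.le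
    linarith
  refine ⟨htendy, htendy', ?_⟩
  intro C
  by_contra hcon
  rw [Filter.not_frequently] at hcon
  set C' : ℝ := max C 1 with hC'
  have hC'1 : (1:ℝ) ≤ C' := le_max_right _ _
  have hC'0 : (0:ℝ) < C' := lt_of_lt_of_le one_pos hC'1
  have hev1 : ∀ᶠ t in 𝓝[<] T, y t < -1 := htendy.eventually (eventually_lt_atBot (-1))
  have hev2 : ∀ᶠ t in 𝓝[<] T, y' t < 0 := htendy'.eventually (eventually_lt_atBot 0)
  have hall : ∀ᶠ t in 𝓝[<] T, ¬C < h (y t) / y t ∧ y t < -1 ∧ y' t < 0 :=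
    hcon.and (hev1.and hev2)
  rw [Filter.eventually_iff, mem_nhdsLT_iff_exists_Ioo_subset] at hall
  obtain ⟨l, hl, hIoo⟩ := hall
  rw [Set.mem_Iio] at hl
  set s' : ℝ := (max l 0 + T) / 2 with hs'
  have hml : max l 0 < T := max_lt hl hT
  have hs'T : s' < T := by rw [hs']; linarith
  have hs'0 : 0 ≤ s' := by
    have : (0:ℝ) ≤ max l 0 := le_max_right _ _
    rw [hs']; linarith
  have hls' : l < s' := by
    have : l ≤ max l 0 := le_max_left _ _
    rw [hs']; linarith
  have hsubI : Set.Ico s' T ⊆ Set.Ico (0:ℝ) T := fun σ hσ => ⟨le_trans hs'0 hσ.1, hσ.2⟩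
  have hprop : ∀ t ∈ Set.Ico s' T, y t < -1 ∧ y' t < 0 ∧ C' * y t ≤ h (y t) := by
    intro t ht
    have htIoo : t ∈ Set.Ioo l T := ⟨lt_of_lt_of_le hls' ht.1, ht.2⟩
    obtain ⟨hA, hB', hC''⟩ := hIoo htIoo
    refine ⟨hB', hC'', ?_⟩
    have hyneg : y t < 0 := by linarith
    have hdiv : h (y t) / y t ≤ C' := le_trans (not_lt.1 hA) (le_max_left _ _)
    exact (div_le_iff_of_neg hyneg).1 hdiv
  -- energy estimate
  have hs'I : s' ∈ Set.Ico s' T := ⟨le_refl s', hs'T⟩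
  have hEmono := monoIco (a := s') (b := T)
    (f := fun t => C' * (y t * y t) - y' t * y' t)
    (g := fun t => C' * (y' t * y t + y t * y' t) - (h (y t) * y' t + y' t * h (y t)))
    (fun t ht =>
      ((((hy t (hsubI ht)).mono hsubI).mul ((hy t (hsubI ht)).mono hsubI)).const_mul C').sub
        (((hy' t (hsubI ht)).mono hsubI).mul ((hy' t (hsubI ht)).mono hsubI)))
    (fun t ht => by
      show 0 ≤ C' * (y' t * y t + y t * y' t) - (h (y t) * y' t + y' t * h (y t))
      obtain ⟨h1, h2, h3⟩ := hprop t ht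
      nlinarith [mul_nonneg (show (0:ℝ) ≤ -y' t by linarith)
        (show (0:ℝ) ≤ h (y t) - C' * y t by linarith)])
  set K₀ : ℝ := y' s' * y' s' - C' * (y s' * y s') with hK₀
  have hEle : ∀ t ∈ Set.Ico s' T, y' t * y' t ≤ C' * (y t * y t) + K₀ := by
    intro t ht
    have := hEmono hs'I ht ht.1
    simp only [] at this
    rw [hK₀]
    linarith
  set a : ℝ := Real.sqrt C' with ha
  set b : ℝ := Real.sqrt (max K₀ 0) with hb
  have ha0 : 0 ≤ a := Real.sqrt_nonneg _
  have hb0 : 0 ≤ b := Real.sqrt_nonneg _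
  have ha2 : a * a = C' := Real.mul_self_sqrt hC'0.le
  have hb2 : b * b = max K₀ 0 := Real.mul_self_sqrt (le_max_right _ _)
  have hkey : ∀ t ∈ Set.Ico s' T, -y' t ≤ a * (-y t) + b := by
    intro t ht
    obtain ⟨h1, h2, h3⟩ := hprop t ht
    have h4 := hEle t ht
    have h5 : (-y' t) * (-y' t) ≤ (a * (-y t) + b) * (a * (-y t) + b) := by
      have hc : K₀ ≤ max K₀ 0 := le_max_left _ _
      nlinarith [mul_nonneg (mul_nonneg ha0 (show (0:ℝ) ≤ -y t by linarith)) hb0]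
    nlinarith [h5, mul_nonneg ha0 (show (0:ℝ) ≤ -y t by linarith), hb0]
  set M₀ : ℝ := a + b with hM₀
  have hM₀0 : 0 ≤ M₀ := by rw [hM₀]; linarith
  have hlogmono := monoIco (a := s') (b := T)
    (f := fun t => M₀ * t - Real.log (1 - y t))
    (g := fun t => M₀ * 1 - -(y' t) / (1 - y t))
    (fun t ht => by
      have h1 := (hprop t ht).1
      have hne : 1 - y t ≠ 0 := by intro hc; rw [sub_eq_zero] at hc; linarith [hc.symm]
      exact ((hasDerivWithinAt_id t _).const_mul M₀).sub
        ((((hy t (hsubI ht)).mono hsubI).const_sub 1).log hne))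
    (fun t ht => by
      show 0 ≤ M₀ * 1 - -(y' t) / (1 - y t)
      obtain ⟨h1, h2, _⟩ := hprop t ht
      have hden : (0:ℝ) < 1 - y t := by linarith
      have h6 := hkey t ht
      have h7 : -(y' t) / (1 - y t) ≤ M₀ := by
        rw [div_le_iff₀ hden]
        have e1 : a * (-y t) ≤ a * (1 - y t) := by
          apply mul_le_mul_of_nonneg_left _ ha0
          linarith
        have e2 : b ≤ b * (1 - y t) := by nlinarith
        rw [hM₀]
        nlinarith [e1, e2, h6]
      linarith)
  set D : ℝ := Real.log (1 - y s') + M₀ * T with hD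
  have hfinal : ∀ t ∈ Set.Ico s' T, 1 - Real.exp D ≤ y t := by
    intro t ht
    have h1 := hlogmono hs'I ht ht.1
    simp only [] at h1
    have h2 : Real.log (1 - y t) ≤ Real.log (1 - y s') + M₀ * (t - s') := by linarith
    have h3 : M₀ * (t - s') ≤ M₀ * T := by
      apply mul_le_mul_of_nonneg_left _ hM₀0
      have h4 := ht.2
      linarith
    have hden : (0:ℝ) < 1 - y t := by linarith [(hprop t ht).1]
    have h5 : 1 - y t = Real.exp (Real.log (1 - y t)) := (Real.exp_log hden).symm
    have h6 : Real.exp (Real.log (1 - y t)) ≤ Real.exp D := by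
      apply Real.exp_le_exp.2
      rw [hD]; linarith
    linarith
  obtain ⟨t, htlt, htIoo⟩ := ((htendy.eventually
    (eventually_lt_atBot (1 - Real.exp D - 1))).and
    (Ioo_mem_nhdsLT_of_mem (show T ∈ Set.Ioc s' T from ⟨hs'T, le_refl T⟩))).exists
  have := hfinal t ⟨htIoo.1.le, htIoo.2⟩
  linarith
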